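/- arXiv:2302.14481 — 2 statements merged into one kernel-verified Lean document; each statement's English description precedes it below -/
import Mathlib

section
/- Let η be a substitution over a finite alphabet A and let (m_i, a_i) for i = 0,…,k be an admissible sequence with respect to η (i.e., for every 1 ≤ i ≤ k, the word m_{i-1}a_{i-1} is a prefix of η(a_i)). Then Σ_{j=0}^{k} |η^j(m_j)| < |η^k(m_k a_k)|. -/
open Filter List

variable {A : Type*}

/-- A substitution applied to a word: concatenation of the images of its letters. -/
def substW (η : A → List A) (w : List A) : List A := (w.map η).flatten

/-- The `k`-th iterate of a substitution applied to a word. -/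
def iterW (η : A → List A) (k : ℕ) (w : List A) : List A := (substW η)^[k] w

/-- `η` is a substitution: nonempty images and at least one growing letter. -/
def IsSubstitution (η : A → List A) : Prop :=
  (∀ c, η c ≠ []) ∧ ∃ a, Tendsto (fun k => (iterW η k [a]).length) atTop atTop

/-- `(m i, a i)` for `i = 0, …, len-1` is an `x`-admissible sequence:
`m (i) ++ [a i]` is a prefix of `η (a (i+1))` and `m (len-1) ++ [a (len-1)]`
is a prefix of `η x`. -/
def AdmSeq (η : A → List A) (len : ℕ) (m : ℕ → List A) (a : ℕ → A) (x : A) : Prop :=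
  (∀ i, i + 1 < len → (m i ++ [a i]) <+: η (a (i + 1))) ∧
  (1 ≤ len → (m (len - 1) ++ [a (len - 1)]) <+: η x)

/-- `Σ_{j<k} |η^j(m_j)|`. -/
def sumLen (η : A → List A) (k : ℕ) (m : ℕ → List A) : ℕ :=
  ∑ j ∈ Finset.range k, (iterW η j (m j)).length

/-- `η^{k-1}(m_{k-1}) η^{k-2}(m_{k-2}) ⋯ η^0(m_0)`. -/
def concatDT (η : A → List A) (k : ℕ) (m : ℕ → List A) : List A :=
  ((List.range k).reverse.map (fun j => iterW η j (m j))).flatten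

/-- The digit word `|m_{k-1}| ⊙ |m_{k-2}| ⊙ ⋯ ⊙ |m_0|`. -/
def dtDigits (k : ℕ) (m : ℕ → List A) : List ℕ :=
  (List.range k).reverse.map (fun j => (m j).length)

/-- Partial run of the automaton `A_{η,x}`: from state `x`, the digit `d`
moves to the `d`-th letter of `η x` when `d < |η x|`. -/
def run (η : A → List A) : List ℕ → A → Option A
  | [], x => some x
  | d :: w, x => if h : d < (η x).length then run η w ((η x)[d]) else none

/-- `u` restricted to nonnegative positions is a periodic point of `η` of period `p`:
every `η^p`-image of a prefix of `u` is again a prefix of `u`. -/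
def RightPer (η : A → List A) (p : ℕ) (u : ℤ → A) : Prop :=
  ∀ n : ℕ, ∀ j : ℕ, j < (iterW η p (List.ofFn (fun i : Fin (n+1) => u i))).length →
    (iterW η p (List.ofFn (fun i : Fin (n+1) => u i)))[j]? = some (u j)

/-- `u` restricted to negative positions is a periodic point of `η` of period `p`:
every `η^p`-image of a suffix `u_{-(n+1)} ⋯ u_{-1}` of the left part is again a
suffix of the left part of `u`. -/
def LeftPer (η : A → List A) (p : ℕ) (u : ℤ → A) : Prop :=
  ∀ n : ℕ, ∀ j : ℕ,
    j < (iterW η p (List.ofFn (fun i : Fin (n+1) => u ((i : ℤ) - (n+1))))).length →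
    (iterW η p (List.ofFn (fun i : Fin (n+1) => u ((i : ℤ) - (n+1)))))[j]? =
      some (u ((j : ℤ) -
        (iterW η p (List.ofFn (fun i : Fin (n+1) => u ((i : ℤ) - (n+1))))).length))

/-- `u : ℤ → A` is a two-sided periodic point of `η` of period `p ≥ 1` with
growing seed `u₋₁ | u₀`. -/
def TwoSidedPerPoint (η : A → List A) (p : ℕ) (u : ℤ → A) : Prop :=
  1 ≤ p ∧ RightPer η p u ∧ LeftPer η p u ∧
  Tendsto (fun k => (iterW η k [u 0]).length) atTop atTop ∧
  Tendsto (fun k => (iterW η k [u (-1)]).length) atTop atTop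

/-- The Dumont–Thomas decomposition data of a positive integer `n` with respect to
the letter `x` (Theorem of Dumont–Thomas for the right-infinite part):
`p ∣ k`, `p ≤ k`, the sequence is `x`-admissible, `m_{k-1} ⋯ m_{k-p} ≠ ε` and
`Σ_{j<k} |η^j(m_j)| = n`. -/
def PosSpec (η : A → List A) (p : ℕ) (x : A) (n : ℤ) (k : ℕ) (m : ℕ → List A)
    (a : ℕ → A) : Prop :=
  p ∣ k ∧ p ≤ k ∧ AdmSeq η k m a x ∧ (∃ i, i < p ∧ m (k - 1 - i) ≠ []) ∧
  (sumLen η k m : ℤ) = n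

/-- The Dumont–Thomas decomposition data of an integer `n ≤ -2` with respect to
the letter `b` (Theorem of Dumont–Thomas for the left-infinite part). -/
def NegSpec (η : A → List A) (p : ℕ) (b : A) (n : ℤ) (k : ℕ) (m : ℕ → List A)
    (a : ℕ → A) : Prop :=
  p ∣ k ∧ p ≤ k ∧ AdmSeq η k m a b ∧
  ((List.range p).map (fun i => iterW η (p - 1 - i) (m (k - 1 - i)))).flatten
      ++ [a (k - p)] ≠ iterW η p [b] ∧
  (sumLen η k m : ℤ) = n + (iterW η k [b]).length

/-- `w` is the Dumont–Thomas complement representation `rep_u(n)` of `n ∈ ℤ`. -/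
def RepSpec (η : A → List A) (p : ℕ) (u : ℤ → A) (n : ℤ) (w : List ℕ) : Prop :=
  (n = 0 ∧ w = [0]) ∨ (n = -1 ∧ w = [1]) ∨
  (1 ≤ n ∧ ∃ k m a, PosSpec η p (u 0) n k m a ∧ w = 0 :: dtDigits k m) ∨
  (n ≤ -2 ∧ ∃ k m a, NegSpec η p (u (-1)) n k m a ∧ w = 1 :: dtDigits k m)

/-- Run of the automaton `A_{η,s}` with initial state `start`: the first digit
`0` (resp. `1`) moves to `u 0` (resp. `u (-1)`). -/
def runSeed (η : A → List A) (u : ℤ → A) : List ℕ → Option A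
  | [] => none
  | d :: w => if d = 0 then run η w (u 0) else if d = 1 then run η w (u (-1)) else none

/-- `|η^{k-p-1}(m_{k-1}) ⋯ η^0(m_p)|`, the `u`-quotient of a positive integer. -/
def uQuotPos (η : A → List A) (p k : ℕ) (m : ℕ → List A) : ℤ :=
  ∑ j ∈ Finset.range (k - p), ((iterW η j (m (j + p))).length : ℤ)

/-- `w = tail_{η,p,x}(n)`: the digit word of the unique `x`-admissible sequence of
length `p` whose length-sum is `n`. -/
def TailSpec (η : A → List A) (p : ℕ) (x : A) (n : ℕ) (w : List ℕ) : Prop :=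
  ∃ m a, AdmSeq η p m a x ∧ sumLen η p m = n ∧ w = dtDigits p m

/-- Radix order: shorter words first, ties broken lexicographically. -/
def radLt (v w : List ℕ) : Prop :=
  v.length < w.length ∨ (v.length = w.length ∧ List.Lex (· < ·) v w)

/-- Reversed-radix order: longer words first, ties broken lexicographically. -/
def revLt (v w : List ℕ) : Prop :=
  w.length < v.length ∨ (v.length = w.length ∧ List.Lex (· < ·) v w)

/-- The total order `≺` on `{0,1}D*`. -/
def precLt (v w : List ℕ) : Prop :=
  (v.head? = some 1 ∧ w.head? = some 0) ∨
  (v.head? = some 0 ∧ w.head? = some 0 ∧ radLt v w) ∨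
  (v.head? = some 1 ∧ w.head? = some 1 ∧ revLt v w)

/-- The base-2 value `Σ_{i<k} w_i 2^i` of the word `w = w_{k-1} ⋯ w_0`. -/
def natVal2 (w : List ℕ) : ℕ := w.foldl (fun acc d => 2 * acc + d) 0

/-- The two's complement value `Σ_{i<k} w_i 2^i − w_{k-1} 2^k`. -/
def val2c (w : List ℕ) : ℤ := (natVal2 w : ℤ) - (w.headI : ℤ) * 2 ^ w.length

/-- Fibonacci numbers with `F 0 = 1`, `F 1 = 2`. -/
def fib2 : ℕ → ℕ
  | 0 => 1
  | 1 => 2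
  | n + 2 => fib2 (n + 1) + fib2 n

/-- The Fibonacci complement value `Σ_{i<k} w_i F_i − w_{k-1} F_k`
of the word `w = w_{k-1} ⋯ w_0`. -/
def valFc (w : List ℕ) : ℤ :=
  (∑ i ∈ Finset.range w.length, (w.reverse.getD i 0 : ℤ) * fib2 i) -
    (w.headI : ℤ) * fib2 w.length

lemma substW_append (η : A → List A) (u v : List A) :
    substW η (u ++ v) = substW η u ++ substW η v := by
  simp [substW]

lemma iterW_append (η : A → List A) (k : ℕ) (u v : List A) :
    iterW η k (u ++ v) = iterW η k u ++ iterW η k v := by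
  induction k generalizing u v with
  | zero => simp [iterW]
  | succ n ih =>
    simp only [iterW, Function.iterate_succ_apply, substW_append]
    exact ih _ _

lemma iterW_prefix (η : A → List A) (k : ℕ) {u v : List A} (h : u <+: v) :
    (iterW η k u).length ≤ (iterW η k v).length := by
  obtain ⟨t, rfl⟩ := h
  rw [iterW_append]
  simp

/-- Dumont–Thomas, Lemma 1.1. If `(m_i, a_i)_{i=0,…,k}` is an
admissible sequence with respect to the substitution `η`, then
`Σ_{j=0}^{k} |η^j(m_j)| < |η^k(m_k a_k)|`. -/
theorem admissible_sum_lt [Finite A] (η : A → List A) (hη : IsSubstitution η)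
    (k : ℕ) (m : ℕ → List A) (a : ℕ → A)
    (hadm : ∀ i, 1 ≤ i → i ≤ k → (m (i - 1) ++ [a (i - 1)]) <+: η (a i)) :
    (∑ j ∈ Finset.range (k + 1), (iterW η j (m j)).length) <
      (iterW η k (m k ++ [a k])).length := by
  induction k with
  | zero => simp [iterW]
  | succ n ih =>
    have IH := ih (fun i h1 h2 => hadm i h1 (h2.trans (Nat.le_succ n)))
    rw [Finset.sum_range_succ, iterW_append]
    have h1 : (iterW η n (m n ++ [a n])).length ≤ (iterW η (n+1) [a (n+1)]).length := by
      have hp := hadm (n+1) (Nat.le_add_left 1 n) le_rfl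
      simp only [Nat.add_sub_cancel] at hp
      have : iterW η (n+1) [a (n+1)] = iterW η n (η (a (n+1))) := by
        simp [iterW, Function.iterate_succ_apply, substW]
      rw [this]
      exact iterW_prefix η n hp
    calc (∑ j ∈ Finset.range (n + 1), (iterW η j (m j)).length) + (iterW η (n+1) (m (n+1))).length
        < (iterW η n (m n ++ [a n])).length + (iterW η (n+1) (m (n+1))).length := by
          omega
      _ ≤ (iterW η (n+1) [a (n+1)]).length + (iterW η (n+1) (m (n+1))).length := by omega
      _ = (iterW η (n+1) (m (n+1)) ++ iterW η (n+1) [a (n+1)]).length := by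
          rw [List.length_append]; omega
end

section
/- Let η be a substitution over A, k ≥ 1 an integer, x ∈ A, and let (m_i, a_i)_{i=0,…,k-1} be an x-admissible sequence with respect to η. For the deterministic automaton A_{η,x} associated with η and initial state x, one has a_i = A_{η,x}(|m_{k-1}| ⊙ |m_{k-2}| ⊙ ⋯ ⊙ |m_i|) for every i = 0,…,k-1. -/
open Filter List

variable {A : Type*}

lemma run_append_aux (η : A → List A) (w : List ℕ) (d : ℕ) (x : A) :
    run η (w ++ [d]) x = (run η w x).bind
      (fun y => if h : d < (η y).length then some ((η y)[d]) else none) := by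
  induction w generalizing x with
  | nil => simp [run]
  | cons e w ih =>
    simp only [List.cons_append, run]
    split
    · exact ih _
    · rfl

lemma prefix_step_aux {s : List A} {c : A} {l : List A} (h : (s ++ [c]) <+: l) :
    ∃ hl : s.length < l.length, l[s.length] = c := by
  obtain ⟨t, ht⟩ := h
  subst ht
  refine ⟨by simp, ?_⟩
  have h2 : (s ++ [c] ++ t)[s.length]? = some c := by
    rw [List.append_assoc, List.getElem?_append_right (le_refl _)]
    simp
  rwa [List.getElem?_eq_getElem (by simp), Option.some_inj] at h2

lemma range_reverse_map_aux (n : ℕ) (f : ℕ → ℕ) :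
    (List.range (n + 1)).reverse.map f =
      ((List.range n).reverse.map (fun j => f (j + 1))) ++ [f 0] := by
  rw [List.range_succ_eq_map]
  simp [List.map_reverse, Function.comp_def, Nat.succ_eq_add_one, Nat.add_comm]

/-- If `(m_i,a_i)_{i=0,…,k-1}` is an `x`-admissible sequence,
then `a_i = A_{η,x}(|m_{k-1}| ⊙ ⋯ ⊙ |m_i|)` for every `i = 0,…,k-1`. -/
theorem admissible_feed_into_automaton [Finite A] (η : A → List A)
    (hη : IsSubstitution η) (k : ℕ) (hk : 1 ≤ k) (x : A)
    (m : ℕ → List A) (a : ℕ → A) (hadm : AdmSeq η k m a x) :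
    ∀ i < k,
      run η ((List.range (k - i)).reverse.map (fun j => (m (j + i)).length)) x =
        some (a i) := by
  have key : ∀ n, n < k →
      run η ((List.range (n + 1)).reverse.map
        (fun j => (m (j + (k - 1 - n))).length)) x = some (a (k - 1 - n)) := by
    intro n
    induction n with
    | zero =>
      intro _
      obtain ⟨hl, hg⟩ := prefix_step_aux (hadm.2 hk)
      simp only [Nat.sub_zero] at *
      simp [List.range_succ, run, hl, hg]
    | succ n ih =>
      intro hn
      have hkn : k - 1 - (n + 1) + 1 = k - 1 - n := by omega
      rw [range_reverse_map_aux]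
      have : (fun j => (m (j + 1 + (k - 1 - (n + 1)))).length) =
          (fun j => (m (j + (k - 1 - n))).length) := by
        funext j
        have hj : j + 1 + (k - 1 - (n + 1)) = j + (k - 1 - n) := by omega
        rw [hj]
      simp only [this]
      rw [run_append_aux, ih (by omega)]
      obtain ⟨hl, hg⟩ := prefix_step_aux (hkn ▸ hadm.1 (k - 1 - (n + 1)) (by omega))
      rw [Option.bind_some]
      simp only [Nat.zero_add]
      rw [dif_pos hl, hg]
  intro i hi
  have h := key (k - 1 - i) (by omega)
  have hi' : k - 1 - (k - 1 - i) = i := by omega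
  rw [hi'] at h
  have : k - i = k - 1 - i + 1 := by omega
  rw [this]
  exact h
end
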